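/- arXiv:math/0409479 — 2 statements merged into one kernel-verified Lean document; each statement's English description precedes it below -/
import Mathlib

section
/- For every ℤ-valued random walk s_n = ξ_1 + ⋯ + ξ_n with i.i.d. increments, and for every z ∈ ℤ and n ≥ 1: G(n) · P{ T(z) ≤ T(0) } · P{ z + s_k ≠ 0 for all k = 1, …, n } ≤ 1, where G(n) = Σ_{i=1}^n P{s_i = 0}. Equivalently, P_z{T(0) > n} ≤ 1/(G(n) · P_0{T(z) ≤ T(0)}) whenever the denominator is positive. -/
open MeasureTheory ProbabilityTheory Filter Set ENNReal NNReal

/-- The random walk `s_n = ξ_1 + ⋯ + ξ_n` (with `s_0 = 0`). -/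
noncomputable def walk {Ω : Type*} (ξ : ℕ → Ω → ℤ) (n : ℕ) (ω : Ω) : ℤ :=
  ∑ i ∈ Finset.Icc 1 n, ξ i ω

/-- The first passage time `T(z) = inf{n ≥ 1 : s_n = z}` (with `inf ∅ = ∞`). -/
noncomputable def passage {Ω : Type*} (ξ : ℕ → Ω → ℤ) (z : ℤ) (ω : Ω) : ℕ∞ :=
  sInf ((fun m : ℕ => (m : ℕ∞)) '' {m : ℕ | 1 ≤ m ∧ walk ξ m ω = z})

/-- `ξ` is a sequence of i.i.d. `ℤ`-valued random variables with common law `μ`. -/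
def IsIIDWalk {Ω : Type*} [MeasurableSpace Ω] (P : Measure Ω) (μ : Measure ℤ)
    (ξ : ℕ → Ω → ℤ) : Prop :=
  (∀ i, Measurable (ξ i)) ∧ (∀ i, P.map (ξ i) = μ) ∧
  iIndepFun ξ P

/-!
Markov property at a fixed time `m`: an event determined by `ξ 0, …, ξ m` is independent of the
increments after `m`, whose law does not depend on `m`. So if events `A m` of the past up to `m`
stay disjoint after each is continued by increments in a set `B`, then `(∑ₘ P(A m)) · P(B)` is the
probability of their disjoint union. Two such families give the bound:

* `A i = {s_i = 0}`, `1 ≤ i ≤ n`, continued without a visit to `0` for `n` steps (a last exit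
  decomposition): `G(n) · P{T(0) > n} ≤ 1`;
* for `z ≠ 0`, `A m = {T(z) = m < T(0)}`, `1 ≤ m ≤ n`, continued from `z` without a visit to `0`
  for `n` steps, together with the event that the walk avoids `0` and `z` up to time `n` (which
  contains `{T(z) ≤ T(0), T(z) > n}`): `P{T(z) ≤ T(0)} · P_z{T(0) > n} ≤ P{T(0) > n}`.
-/

namespace LastExit

variable {Ω : Type*} {ξ : ℕ → Ω → ℤ} {ω : Ω}

def incr (ξ : ℕ → Ω → ℤ) (c : ℕ) (ω : Ω) : ℕ → ℤ := fun i => ξ (c + 1 + i) ω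

theorem walk_add (ξ : ℕ → Ω → ℤ) (c k : ℕ) (ω : Ω) :
    walk ξ (c + k) ω = walk ξ c ω + ∑ i ∈ Finset.range k, incr ξ c ω i := by
  induction k with
  | zero => simp
  | succ k ih =>
    rw [← add_assoc, walk, Finset.sum_Icc_succ_top (by omega), ← walk, ih,
      Finset.sum_range_succ, incr]
    ring_nf

theorem walk_eq_sum_incr (ξ : ℕ → Ω → ℤ) (k : ℕ) (ω : Ω) :
    walk ξ k ω = ∑ i ∈ Finset.range k, incr ξ 0 ω i := by
  simpa [walk] using walk_add ξ 0 k ω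

def avoidsZero (v : ℤ) (n : ℕ) : Set (ℕ → ℤ) :=
  {x | ∀ k : ℕ, 1 ≤ k → k ≤ n → v + ∑ i ∈ Finset.range k, x i ≠ 0}

theorem measurableSet_avoidsZero (v : ℤ) (n : ℕ) : MeasurableSet (avoidsZero v n) :=
  measurableSet_setOfPred.2 (by fun_prop)

theorem preimage_incr_zero_avoidsZero (ξ : ℕ → Ω → ℤ) (v : ℤ) (n : ℕ) :
    incr ξ 0 ⁻¹' avoidsZero v n = {ω | ∀ k : ℕ, 1 ≤ k → k ≤ n → v + walk ξ k ω ≠ 0} := by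
  simp only [avoidsZero, Set.preimage_ofPred_eq, walk_eq_sum_incr]

theorem walk_add_ne_zero_of_mem_avoidsZero {c n k : ℕ} {v : ℤ} (hc : walk ξ c ω = v)
    (hx : incr ξ c ω ∈ avoidsZero v n) (hk : 1 ≤ k) (hkn : k ≤ n) : walk ξ (c + k) ω ≠ 0 := by
  rw [walk_add, hc]
  exact hx k hk hkn

theorem passage_le_coe_iff {z : ℤ} {m : ℕ} :
    passage ξ z ω ≤ m ↔ ∃ k, 1 ≤ k ∧ k ≤ m ∧ walk ξ k ω = z := by
  constructor
  · intro hle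
    have hne : ((fun m : ℕ => (m : ℕ∞)) '' {m : ℕ | 1 ≤ m ∧ walk ξ m ω = z}).Nonempty := by
      by_contra hemp
      rw [Set.not_nonempty_iff_eq_empty] at hemp
      simp [passage, hemp] at hle
    obtain ⟨k, ⟨hk, hkz⟩, hkT⟩ := csInf_mem hne
    rw [passage, ← hkT] at hle
    exact ⟨k, hk, Nat.cast_le.1 hle, hkz⟩
  · rintro ⟨k, hk, hkm, hkz⟩
    have hkS : k ∈ {m : ℕ | 1 ≤ m ∧ walk ξ m ω = z} := ⟨hk, hkz⟩
    exact (sInf_le (Set.mem_image_of_mem _ hkS)).trans (Nat.cast_le.2 hkm)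

/-- For `z ≠ 0` this is the event `T(z) = m < T(0)`. -/
def hitsFirstAt (ξ : ℕ → Ω → ℤ) (z : ℤ) (m : ℕ) : Set Ω :=
  {ω | walk ξ m ω = z ∧ ∀ k, 1 ≤ k → k < m → walk ξ k ω ≠ 0 ∧ walk ξ k ω ≠ z}

theorem pairwiseDisjoint_hitsFirstAt (z : ℤ) (n : ℕ) :
    (Finset.Icc 1 n : Set ℕ).PairwiseDisjoint (hitsFirstAt ξ z) := by
  by_contra hnd
  obtain ⟨m, hm, m', -, hmm', ω, ⟨hmz, -⟩, -, hbefore⟩ :=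
    Set.exists_lt_mem_inter_of_not_pairwiseDisjoint hnd
  simp only [Finset.coe_Icc, Set.mem_Icc] at hm
  exact (hbefore m hm.1 hmm').2 hmz

theorem setOf_passage_le_subset (ξ : ℕ → Ω → ℤ) (z : ℤ) (n : ℕ) :
    {ω | passage ξ z ω ≤ passage ξ 0 ω} ⊆ (⋃ m ∈ Finset.Icc 1 n, hitsFirstAt ξ z m) ∪
      {ω | ∀ k, 1 ≤ k → k ≤ n → walk ξ k ω ≠ 0 ∧ walk ξ k ω ≠ z} := by
  classical
  intro ω hω
  have hz_first : ∀ k, 1 ≤ k → walk ξ k ω = 0 → ∃ j, 1 ≤ j ∧ j ≤ k ∧ walk ξ j ω = z :=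
    fun k hk hk0 => passage_le_coe_iff.1 (hω.trans (passage_le_coe_iff.2 ⟨k, hk, le_rfl, hk0⟩))
  by_cases hex : ∃ k, 1 ≤ k ∧ k ≤ n ∧ walk ξ k ω = z
  · obtain ⟨hm, hmn, hmz⟩ := Nat.find_spec hex
    have hbefore : ∀ k, 1 ≤ k → k < Nat.find hex → walk ξ k ω ≠ z :=
      fun k hk hkm hkz => Nat.find_min hex hkm ⟨hk, by omega, hkz⟩
    refine Or.inl (Set.mem_biUnion (Finset.mem_coe.2 (Finset.mem_Icc.2 ⟨hm, hmn⟩))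
      ⟨hmz, fun k hk hkm => ⟨fun hk0 => ?_, hbefore k hk hkm⟩⟩)
    obtain ⟨j, hj, hjk, hjz⟩ := hz_first k hk hk0
    exact hbefore j hj (by omega) hjz
  · push Not at hex
    refine Or.inr fun k hk hkn => ⟨fun hk0 => ?_, hex k hk hkn⟩
    obtain ⟨j, hj, hjk, hjz⟩ := hz_first k hk hk0
    exact hex j hj (by omega) hjz

abbrev past (ξ : ℕ → Ω → ℤ) (m : ℕ) : MeasurableSpace Ω :=
  ⨆ j ∈ Set.Iic m, MeasurableSpace.comap (ξ j) inferInstance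

theorem measurable_walk_past {k m : ℕ} (hk : k ≤ m) : Measurable[past ξ m] (walk ξ k) :=
  Finset.measurable_sum _ fun j hj => (comap_measurable (ξ j)).mono
    (le_iSup₂ (f := fun j (_ : j ∈ Set.Iic m) => MeasurableSpace.comap (ξ j) inferInstance) j
      (by simp only [Finset.mem_Icc, Set.mem_Iic] at hj ⊢; omega)) le_rfl

theorem measurableSet_hitsFirstAt (z : ℤ) (m : ℕ) :
    MeasurableSet[past ξ m] (hitsFirstAt ξ z m) := by
  rw [hitsFirstAt, Set.ofPred_and]
  refine (measurable_walk_past le_rfl (measurableSet_singleton z)).inter ?_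
  simp only [Set.ofPred_forall]
  refine .iInter fun k => .iInter fun _ => .iInter fun hk => ?_
  exact (measurable_walk_past hk.le (measurableSet_singleton 0).compl).inter
    (measurable_walk_past hk.le (measurableSet_singleton z).compl)

variable [MeasurableSpace Ω] {P : Measure Ω} {μ : Measure ℤ}

theorem past_le (h : IsIIDWalk P μ ξ) (m : ℕ) : past ξ m ≤ ‹MeasurableSpace Ω› :=
  iSup₂_le fun j _ => (h.1 j).comap_le

theorem measurable_incr (h : IsIIDWalk P μ ξ) (c : ℕ) : Measurable (incr ξ c) :=
  measurable_pi_lambda _ fun _ => h.1 _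

theorem map_incr [IsProbabilityMeasure μ] (h : IsIIDWalk P μ ξ) (c : ℕ) :
    P.map (incr ξ c) = Measure.infinitePi fun _ => μ := by
  show P.map (fun ω i => ξ (c + 1 + i) ω) = _
  simpa [h.2.1] using (h.2.2.precomp (g := fun i => c + 1 + i)
    (add_right_injective _)).map_fun_eq_infinitePi_map fun _ => h.1 _

theorem measure_incr_preimage [IsProbabilityMeasure μ] (h : IsIIDWalk P μ ξ) (c : ℕ)
    {B : Set (ℕ → ℤ)} (hB : MeasurableSet B) : P (incr ξ c ⁻¹' B) = P (incr ξ 0 ⁻¹' B) := by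
  rw [← Measure.map_apply (measurable_incr h c) hB, ← Measure.map_apply (measurable_incr h 0) hB,
    map_incr h, map_incr h]

theorem measure_inter_incr_preimage [IsProbabilityMeasure μ] (h : IsIIDWalk P μ ξ) {m : ℕ}
    {A : Set Ω} (hA : MeasurableSet[past ξ m] A) {B : Set (ℕ → ℤ)} (hB : MeasurableSet B) :
    P (A ∩ incr ξ m ⁻¹' B) = P A * P (incr ξ 0 ⁻¹' B) := by
  have hindep := indep_iSup_of_disjoint (fun j => (h.1 j).comap_le) h.2.2.iIndep
    (Set.disjoint_left.2 fun j (hj : j ≤ m) (hj' : m < j) => by omega :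
      Disjoint (Set.Iic m) (Set.Ioi m))
  have hfuture :
      Measurable[⨆ j ∈ Set.Ioi m, MeasurableSpace.comap (ξ j) inferInstance] (incr ξ m) :=
    @measurable_pi_lambda Ω ℕ (fun _ => ℤ)
      (⨆ j ∈ Set.Ioi m, MeasurableSpace.comap (ξ j) inferInstance) _ _ fun i =>
      (comap_measurable (ξ (m + 1 + i))).mono
        (le_iSup₂ (f := fun j (_ : j ∈ Set.Ioi m) => MeasurableSpace.comap (ξ j) inferInstance) _
          (by simp only [Set.mem_Ioi]; omega)) le_rfl
  rw [(Indep_iff _ _ _).1 hindep _ _ hA (hfuture hB), measure_incr_preimage h m hB]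

theorem sum_measure_mul_eq [IsProbabilityMeasure μ] (h : IsIIDWalk P μ ξ) {s : Finset ℕ}
    {A : ℕ → Set Ω} (hA : ∀ m ∈ s, MeasurableSet[past ξ m] (A m)) {B : Set (ℕ → ℤ)}
    (hB : MeasurableSet B) (hdisj : (s : Set ℕ).PairwiseDisjoint fun m => A m ∩ incr ξ m ⁻¹' B) :
    (∑ m ∈ s, P (A m)) * P (incr ξ 0 ⁻¹' B) = P (⋃ m ∈ s, A m ∩ incr ξ m ⁻¹' B) := by
  rw [Finset.sum_mul, measure_biUnion_finset hdisj
    fun m hm => (past_le h m _ (hA m hm)).inter (measurable_incr h m hB)]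
  exact Finset.sum_congr rfl fun m hm => (measure_inter_incr_preimage h (hA m hm) hB).symm

theorem sum_measure_walk_eq_zero_mul_le_one [IsProbabilityMeasure P] [IsProbabilityMeasure μ]
    (h : IsIIDWalk P μ ξ) (n : ℕ) :
    (∑ i ∈ Finset.Icc 1 n, P {ω | walk ξ i ω = 0}) * P (incr ξ 0 ⁻¹' avoidsZero 0 n) ≤ 1 := by
  rw [sum_measure_mul_eq h (A := fun i => {ω | walk ξ i ω = 0})
    (fun _ _ => measurable_walk_past le_rfl (measurableSet_singleton 0))
    (measurableSet_avoidsZero 0 n) ?_]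
  · exact prob_le_one
  by_contra hnd
  obtain ⟨i, hi, j, hj, hij, ω, ⟨hi0, hiav⟩, hj0, -⟩ :=
    Set.exists_lt_mem_inter_of_not_pairwiseDisjoint hnd
  simp only [Finset.coe_Icc, Set.mem_Icc] at hi hj
  have hj_ne := walk_add_ne_zero_of_mem_avoidsZero hi0 hiav (k := j - i) (by omega) (by omega)
  rw [Nat.add_sub_cancel' hij.le] at hj_ne
  exact hj_ne hj0

theorem measure_passage_le_mul_le [IsProbabilityMeasure P] [IsProbabilityMeasure μ]
    (h : IsIIDWalk P μ ξ) (z : ℤ) (n : ℕ) :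
    P {ω | passage ξ z ω ≤ passage ξ 0 ω} * P (incr ξ 0 ⁻¹' avoidsZero z n) ≤
      P (incr ξ 0 ⁻¹' avoidsZero 0 n) := by
  rcases eq_or_ne z 0 with rfl | hz
  · simp
  set V := {ω | ∀ k, 1 ≤ k → k ≤ n → walk ξ k ω ≠ 0 ∧ walk ξ k ω ≠ z}
  set R := ⋃ m ∈ Finset.Icc 1 n, hitsFirstAt ξ z m ∩ incr ξ m ⁻¹' avoidsZero z n
  have hVmeas : MeasurableSet V := by
    have hw : ∀ k, Measurable (walk ξ k) := fun k => (measurable_walk_past le_rfl).mono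
      (past_le h k) le_rfl
    exact measurableSet_setOfPred.2 (by fun_prop)
  have hR : (∑ m ∈ Finset.Icc 1 n, P (hitsFirstAt ξ z m)) * P (incr ξ 0 ⁻¹' avoidsZero z n) =
      P R :=
    sum_measure_mul_eq h (fun m _ => measurableSet_hitsFirstAt z m) (measurableSet_avoidsZero z n)
      ((pairwiseDisjoint_hitsFirstAt z n).mono fun _ => Set.inter_subset_left)
  have hRV : Disjoint R V := by
    simp only [R, Set.disjoint_iUnion_left]
    exact fun m hm => Set.disjoint_left.2 fun ω ⟨⟨hmz, _⟩, _⟩ hV =>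
      (hV m (Finset.mem_Icc.1 hm).1 (Finset.mem_Icc.1 hm).2).2 hmz
  have hRV_sub : R ∪ V ⊆ incr ξ 0 ⁻¹' avoidsZero 0 n := by
    rw [preimage_incr_zero_avoidsZero]
    rintro ω (hω | hω) k hk hkn <;> rw [zero_add]
    · simp only [R, Set.mem_iUnion] at hω
      obtain ⟨m, hm, ⟨hmz, hbefore⟩, hav⟩ := hω
      rcases lt_trichotomy k m with hkm | rfl | hmk
      · exact (hbefore k hk hkm).1
      · exact hmz ▸ hz
      · have hk_ne := walk_add_ne_zero_of_mem_avoidsZero hmz hav (k := k - m) (by omega)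
          (by omega)
        rwa [Nat.add_sub_cancel' hmk.le] at hk_ne
    · exact (hω k hk hkn).1
  calc P {ω | passage ξ z ω ≤ passage ξ 0 ω} * P (incr ξ 0 ⁻¹' avoidsZero z n)
      ≤ ((∑ m ∈ Finset.Icc 1 n, P (hitsFirstAt ξ z m)) + P V) *
          P (incr ξ 0 ⁻¹' avoidsZero z n) := by
        gcongr
        exact (measure_mono (setOf_passage_le_subset ξ z n)).trans
          ((measure_union_le _ _).trans (add_le_add_left (measure_biUnion_finset_le _ _) _))
    _ ≤ P R + P V := by
        rw [add_mul, hR]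
        gcongr
        exact mul_le_of_le_one_right' prob_le_one
    _ = P (R ∪ V) := (measure_union hRV hVmeas).symm
    _ ≤ P (incr ξ 0 ⁻¹' avoidsZero 0 n) := measure_mono hRV_sub

end LastExit

open LastExit

theorem last_exit_decomposition_bound_general
    {Ω : Type*} [MeasurableSpace Ω] (P : Measure Ω) [IsProbabilityMeasure P]
    (μ : Measure ℤ) [IsProbabilityMeasure μ]
    (ξ : ℕ → Ω → ℤ)
    (h : IsIIDWalk P μ ξ)
    (z : ℤ) (n : ℕ) :
    (∑ i ∈ Finset.Icc 1 n, (P {ω | walk ξ i ω = 0}).toReal) *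
      (P {ω | passage ξ z ω ≤ passage ξ 0 ω}).toReal *
      (P {ω | ∀ k : ℕ, 1 ≤ k → k ≤ n → z + walk ξ k ω ≠ 0}).toReal ≤ 1 := by
  have key : (∑ i ∈ Finset.Icc 1 n, P {ω | walk ξ i ω = 0}) *
      P {ω | passage ξ z ω ≤ passage ξ 0 ω} *
      P {ω | ∀ k : ℕ, 1 ≤ k → k ≤ n → z + walk ξ k ω ≠ 0} ≤ 1 :=
    calc _ = (∑ i ∈ Finset.Icc 1 n, P {ω | walk ξ i ω = 0}) *
          (P {ω | passage ξ z ω ≤ passage ξ 0 ω} * P (incr ξ 0 ⁻¹' avoidsZero z n)) := by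
          rw [preimage_incr_zero_avoidsZero, mul_assoc]
      _ ≤ (∑ i ∈ Finset.Icc 1 n, P {ω | walk ξ i ω = 0}) * P (incr ξ 0 ⁻¹' avoidsZero 0 n) := by
          gcongr
          exact measure_passage_le_mul_le h z n
      _ ≤ 1 := sum_measure_walk_eq_zero_mul_le_one h n
  rw [← ENNReal.toReal_sum fun _ _ => measure_ne_top _ _, ← ENNReal.toReal_mul,
    ← ENNReal.toReal_mul]
  simpa using ENNReal.toReal_mono one_ne_top key

/-- Lemma 6.1: for every lattice random walk with i.i.d. increments,
`G(n) · P{T(z) ≤ T(0)} · P_z{T(0) > n} ≤ 1`. -/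
theorem last_exit_decomposition_bound
    {Ω : Type*} [MeasurableSpace Ω] (P : Measure Ω) [IsProbabilityMeasure P]
    (μ : Measure ℤ) [IsProbabilityMeasure μ]
    (ξ : ℕ → Ω → ℤ)
    (h : IsIIDWalk P μ ξ)
    (z : ℤ) (n : ℕ) (hn : 1 ≤ n) :
    (∑ i ∈ Finset.Icc 1 n, (P {ω | walk ξ i ω = 0}).toReal) *
      (P {ω | passage ξ z ω ≤ passage ξ 0 ω}).toReal *
      (P {ω | ∀ k : ℕ, 1 ≤ k → k ≤ n → z + walk ξ k ω ≠ 0}).toReal ≤ 1 :=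
  last_exit_decomposition_bound_general P μ ξ h z n
end

section
/- Let H : ℝ₊ → ℝ₊ be non-decreasing and measurable, and let E ⊆ [0,1] be compact with Ψ_H(E) = ∞. Then there exists a non-empty compact set G ⊆ E such that ψ_H(I ∩ G) = ∞ for every open interval I ⊆ [0,1] with rational endpoints that intersects G. -/
/-!
Let `U` be the union of the rational intervals `I` with `Ψ_H(I ∩ E) < ∞` and put `G = E \ U`.
Since `Ψ_H < ∞` is stable under countable unions, `Ψ_H(E ∩ U) < ∞`, so `G` is nonempty.
If `ψ_H(I ∩ G) < ∞` for a rational interval `I`, then `I ∩ E = (I ∩ G) ∪ (I ∩ E ∩ U)` has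
`Ψ_H < ∞`, because an open set is a countable union of closed sets and `ψ_H` is monotone on
bounded sets; hence `I ⊆ U`, and `I` cannot meet `G`.
-/

open MeasureTheory Set ENNReal

/-- Standard Gaussian tail function. -/
noncomputable def gaussTail (z : ℝ) : ℝ :=
  ∫ x in Set.Ioi z, Real.exp (-(x ^ 2) / 2) / Real.sqrt (2 * Real.pi)

/-- Kolmogorov ε-entropy: maximal number of ε-separated points of `E`. -/
noncomputable def kolEntropy (E : Set ℝ) (ε : ℝ) : ℕ :=
  sSup {k : ℕ | ∃ F : Finset ℝ, ↑F ⊆ E ∧ F.card = k ∧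
    ∀ x ∈ F, ∀ y ∈ F, x ≠ y → ε ≤ |x - y|}

/-- `ψ_H(E) = ∫_1^∞ H²(t) K_E(1/H²(t)) Φ̄(H(t)) dt/t`, as an extended real number. -/
noncomputable def psiH (H : ℝ → ℝ) (E : Set ℝ) : ℝ≥0∞ :=
  ∫⁻ t in Set.Ioi (1 : ℝ),
    ENNReal.ofReal (H t ^ 2 * (kolEntropy E (1 / H t ^ 2) : ℝ) * gaussTail (H t) / t)

/-- `Ψ_H(E) < ∞`: `E` is a countable union of closed sets, each with finite `ψ_H`. -/
def PsiFin (H : ℝ → ℝ) (E : Set ℝ) : Prop :=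
  ∃ En : ℕ → Set ℝ, (∀ n, IsClosed (En n)) ∧ E = ⋃ n, En n ∧ ∀ n, psiH H (En n) ≠ ⊤

open Bornology

lemma gaussTail_nonneg (z : ℝ) : 0 ≤ gaussTail z :=
  integral_nonneg fun _ => by positivity

lemma card_le_of_separated_of_subset_Icc {F : Finset ℝ} {a b ε : ℝ} (hε : 0 < ε)
    (hF : ↑F ⊆ Icc a b) (hsep : ∀ x ∈ F, ∀ y ∈ F, x ≠ y → ε ≤ |x - y|) :
    F.card ≤ ⌊(b - a) / ε⌋₊ + 1 := by
  -- distinct points of `F` lie in distinct cells `[a + kε, a + (k+1)ε)`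
  have hcell : InjOn (fun x => ⌊(x - a) / ε⌋₊) F := by
    intro x hx y hy hxy
    by_contra hne
    have hx0 : 0 ≤ (x - a) / ε := div_nonneg (sub_nonneg.2 (hF hx).1) hε.le
    have hy0 : 0 ≤ (y - a) / ε := div_nonneg (sub_nonneg.2 (hF hy).1) hε.le
    have hcast : (⌊(x - a) / ε⌋₊ : ℝ) = ⌊(y - a) / ε⌋₊ := congrArg Nat.cast hxy
    have hclose : |(x - a) / ε - (y - a) / ε| < 1 := abs_sub_lt_iff.2
      ⟨by linarith [Nat.lt_floor_add_one ((x - a) / ε), Nat.floor_le hy0],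
       by linarith [Nat.lt_floor_add_one ((y - a) / ε), Nat.floor_le hx0]⟩
    rw [← sub_div, abs_div, abs_of_pos hε, div_lt_one hε, sub_sub_sub_cancel_right] at hclose
    exact (hsep x hx y hy hne).not_gt hclose
  calc F.card ≤ (Finset.range (⌊(b - a) / ε⌋₊ + 1)).card := by
        refine Finset.card_le_card_of_injOn _ (fun x hx => ?_) hcell
        rw [Finset.mem_coe, Finset.mem_range, Nat.lt_succ_iff]
        exact Nat.floor_le_floor (by gcongr; exact (hF hx).2)
    _ = ⌊(b - a) / ε⌋₊ + 1 := Finset.card_range _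

lemma kolEntropy_mono {S T : Set ℝ} (hST : S ⊆ T) (hT : IsBounded T) {ε : ℝ} (hε : 0 < ε) :
    kolEntropy S ε ≤ kolEntropy T ε := by
  refine csSup_le_csSup ⟨⌊(sSup T - sInf T) / ε⌋₊ + 1, ?_⟩ ⟨0, ∅, by simp⟩ ?_
  · rintro k ⟨F, hF, rfl, hsep⟩
    exact card_le_of_separated_of_subset_Icc hε (hF.trans hT.subset_Icc_sInf_sSup) hsep
  · rintro k ⟨F, hF, hk, hsep⟩
    exact ⟨F, hF.trans hST, hk, hsep⟩

lemma kolEntropy_empty (ε : ℝ) : kolEntropy ∅ ε = 0 :=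
  Nat.le_zero.1 <| csSup_le' fun _ ⟨F, hF, hk, _⟩ => by
    rw [← hk, Finset.coe_eq_empty.1 (subset_empty_iff.1 hF), Finset.card_empty]

lemma psiH_empty (H : ℝ → ℝ) : psiH H ∅ = 0 := by
  simp [psiH, kolEntropy_empty]

lemma psiH_mono (H : ℝ → ℝ) {S T : Set ℝ} (hST : S ⊆ T) (hT : IsBounded T) :
    psiH H S ≤ psiH H T := by
  refine setLIntegral_mono' measurableSet_Ioi fun t ht => ?_
  rcases eq_or_ne (H t) 0 with h0 | h0
  · simp [h0]
  have hK : (kolEntropy S (1 / H t ^ 2) : ℝ) ≤ kolEntropy T (1 / H t ^ 2) :=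
    Nat.cast_le.2 (kolEntropy_mono hST hT (by positivity))
  have := gaussTail_nonneg (H t)
  gcongr
  exact (zero_lt_one.trans ht).le

namespace PsiFin

variable {H : ℝ → ℝ}

lemma of_iUnion_isClosed {ι : Type*} [Countable ι] {F : ι → Set ℝ}
    (hF : ∀ i, IsClosed (F i)) (hψ : ∀ i, psiH H (F i) ≠ ⊤) : PsiFin H (⋃ i, F i) := by
  -- pad the family with `∅` so that it can be enumerated by `ℕ` even when `ι` is empty
  obtain ⟨g, hg⟩ := exists_surjective_nat (Option ι)
  refine ⟨fun n => (g n).elim ∅ F, fun n => ?_, ?_, fun n => ?_⟩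
  · dsimp only
    cases g n <;> simp [hF]
  · rw [hg.iUnion_comp (fun o => o.elim ∅ F), iUnion_option]
    simp
  · dsimp only
    cases g n <;> simp [hψ, psiH_empty]

lemma iUnion {ι : Type*} [Countable ι] {A : ι → Set ℝ} (h : ∀ i, PsiFin H (A i)) :
    PsiFin H (⋃ i, A i) := by
  choose En hcl hun hfin using h
  have hA : ⋃ i, A i = ⋃ p : ι × ℕ, En p.1 p.2 := by simp only [iUnion_prod', hun]
  rw [hA]
  exact of_iUnion_isClosed (fun p => hcl _ _) fun p => hfin _ _

lemma union {S T : Set ℝ} (hS : PsiFin H S) (hT : PsiFin H T) : PsiFin H (S ∪ T) := by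
  rw [union_eq_iUnion]
  exact iUnion (Bool.forall_bool.2 ⟨hT, hS⟩)

lemma of_isOpen_inter_isClosed {U C : Set ℝ} (hU : IsOpen U) (hC : IsClosed C)
    (hb : IsBounded (U ∩ C)) (hψ : psiH H (U ∩ C) ≠ ⊤) : PsiFin H (U ∩ C) := by
  obtain ⟨F, hFc, hFU, hFun, -⟩ := hU.exists_iUnion_isClosed
  rw [← hFun, iUnion_inter] at hψ hb ⊢
  exact of_iUnion_isClosed (fun n => (hFc n).inter hC) fun n =>
    ne_top_of_le_ne_top hψ (psiH_mono H (subset_iUnion (fun n => F n ∩ C) n) hb)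

lemma isOpen_inter {U S : Set ℝ} (hS : PsiFin H S) (hb : IsBounded S) (hU : IsOpen U) :
    PsiFin H (U ∩ S) := by
  obtain ⟨En, hcl, rfl, hfin⟩ := hS
  rw [inter_iUnion]
  refine iUnion fun n => of_isOpen_inter_isClosed hU (hcl n) ?_ ?_
  · exact hb.subset (inter_subset_right.trans (subset_iUnion En n))
  · exact ne_top_of_le_ne_top (hfin n)
      (psiH_mono H inter_subset_right (hb.subset (subset_iUnion En n)))

end PsiFin

theorem exists_compact_subset_psiH_infinite_general
    (H : ℝ → ℝ)
    (E : Set ℝ) (hEcomp : IsCompact E)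
    (hPsi : ¬ PsiFin H E) :
    ∃ G : Set ℝ, G ⊆ E ∧ G.Nonempty ∧ IsCompact G ∧
      ∀ p q : ℚ, Set.Ioo (p : ℝ) (q : ℝ) ⊆ Set.Icc 0 1 →
        (Set.Ioo (p : ℝ) (q : ℝ) ∩ G).Nonempty →
        psiH H (Set.Ioo (p : ℝ) (q : ℝ) ∩ G) = ⊤ := by
  set J : Set (ℚ × ℚ) := {pq | PsiFin H (Ioo (pq.1 : ℝ) pq.2 ∩ E)}
  set U := ⋃ pq : J, Ioo (pq.1.1 : ℝ) pq.1.2 with hU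
  have hEU : PsiFin H (E ∩ U) := by
    rw [hU, inter_comm, iUnion_inter]
    exact PsiFin.iUnion fun pq => pq.2
  have hG : IsCompact (E \ U) := hEcomp.diff (isOpen_iUnion fun _ => isOpen_Ioo)
  refine ⟨E \ U, sdiff_subset, ?_, hG, fun p q _ ⟨x, hxI, _, hxU⟩ => ?_⟩
  · by_contra hempty
    rw [not_nonempty_iff_eq_empty, sdiff_eq_empty] at hempty
    exact hPsi (inter_eq_left.2 hempty ▸ hEU)
  · by_contra hψ
    have hb := hEcomp.isBounded
    have hIE : PsiFin H (Ioo (p : ℝ) q ∩ E) := by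
      rw [← sdiff_union_inter E U, inter_union_distrib_left]
      exact (PsiFin.of_isOpen_inter_isClosed isOpen_Ioo hG.isClosed
        (hb.subset (inter_subset_right.trans sdiff_subset)) hψ).union
        (hEU.isOpen_inter (hb.subset inter_subset_left) isOpen_Ioo)
    exact hxU (mem_iUnion.2 ⟨⟨(p, q), hIE⟩, hxI⟩)

/-- Lemma 2.10: if `Ψ_H(E) = ∞`, there is a nonempty compact `G ⊆ E` such that
`ψ_H(I ∩ G) = ∞` for every rational open interval `I` meeting `G`. -/
theorem exists_compact_subset_psiH_infinite
    (H : ℝ → ℝ)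
    (hH0 : ∀ t, 0 ≤ t → 0 ≤ H t)
    (hHmono : MonotoneOn H (Set.Ici 0))
    (hHmeas : Measurable H)
    (E : Set ℝ) (hE : E ⊆ Set.Icc 0 1) (hEcomp : IsCompact E)
    (hPsi : ¬ PsiFin H E) :
    ∃ G : Set ℝ, G ⊆ E ∧ G.Nonempty ∧ IsCompact G ∧
      ∀ p q : ℚ, Set.Ioo (p : ℝ) (q : ℝ) ⊆ Set.Icc 0 1 →
        (Set.Ioo (p : ℝ) (q : ℝ) ∩ G).Nonempty →
        psiH H (Set.Ioo (p : ℝ) (q : ℝ) ∩ G) = ⊤ :=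
  exists_compact_subset_psiH_infinite_general H E hEcomp hPsi
end
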